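/- Let a, b, c be nonnegative integers, V = 𝔽₂², U₁ = span{e₁} and U₂ = span{e₂} with e₁ = (1,0), e₂ = (0,1), and let M = U₁^a × U₂^b × V^c, viewed as a subspace of V^{a+b+c} on which β acts diagonally (componentwise by matrix–vector multiplication); M is invariant under this action. Let T ⊆ M be an 𝔽₂-subspace with β·T ⊆ T. Suppose that: (i) the composite map M → U₁^a × V^c → (V/U₂)^{a+c}, given by dropping the middle b coordinates and reducing each remaining coordinate modulo U₂, restricts to a surjection on T, and (ii) the composite map M → U₂^b × V^c → (V/U₁)^{b+c}, given by dropping the first a coordinates and reducing each remaining coordinate modulo U₁, restricts to a surjection on T. Then T = M. -/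
import Mathlib


open Matrix

/-- `β = !![1,0;0,0]` in `M₂(𝔽₂)`. -/
def betaM : Matrix (Fin 2) (Fin 2) (ZMod 2) := !![1, 0; 0, 0]

/-- `e₁ = (1,0)` in `𝔽₂²`. -/
def e1 : Fin 2 → ZMod 2 := ![1, 0]

/-- `e₂ = (0,1)` in `𝔽₂²`. -/
def e2 : Fin 2 → ZMod 2 := ![0, 1]

/-- `U₁ = span{e₁} ⊆ 𝔽₂²`. -/
def U1 : Submodule (ZMod 2) (Fin 2 → ZMod 2) := Submodule.span (ZMod 2) {e1}

/-- `U₂ = span{e₂} ⊆ 𝔽₂²`. -/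
def U2 : Submodule (ZMod 2) (Fin 2 → ZMod 2) := Submodule.span (ZMod 2) {e2}

/-- The diagonal (componentwise) action of `β` on `(𝔽₂²)^a × (𝔽₂²)^b × (𝔽₂²)^c`. -/
def diagBeta (a b c : ℕ) :
    ((Fin a → (Fin 2 → ZMod 2)) × (Fin b → (Fin 2 → ZMod 2)) × (Fin c → (Fin 2 → ZMod 2)))
      →ₗ[ZMod 2]
    ((Fin a → (Fin 2 → ZMod 2)) × (Fin b → (Fin 2 → ZMod 2)) × (Fin c → (Fin 2 → ZMod 2))) :=
  LinearMap.prodMap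
    (LinearMap.pi fun i => betaM.mulVecLin ∘ₗ LinearMap.proj i)
    (LinearMap.prodMap
      (LinearMap.pi fun j => betaM.mulVecLin ∘ₗ LinearMap.proj j)
      (LinearMap.pi fun k => betaM.mulVecLin ∘ₗ LinearMap.proj k))

/-- The submodule `M = U₁^a × U₂^b × V^c` of `V^a × V^b × V^c` where `V = 𝔽₂²`. -/
def Msub (a b c : ℕ) :
    Submodule (ZMod 2)
      ((Fin a → (Fin 2 → ZMod 2)) × (Fin b → (Fin 2 → ZMod 2)) ×
        (Fin c → (Fin 2 → ZMod 2))) :=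
  (Submodule.pi Set.univ fun _ : Fin a => U1).prod
    ((Submodule.pi Set.univ fun _ : Fin b => U2).prod ⊤)

lemma mem_U1_iff (v : Fin 2 → ZMod 2) : v ∈ U1 ↔ v 1 = 0 := by
  rw [U1, Submodule.mem_span_singleton]
  constructor
  · rintro ⟨c, rfl⟩; simp [e1]
  · intro h
    exact ⟨v 0, funext fun i => by fin_cases i <;> simp [e1, h, smul_eq_mul]⟩

lemma mem_U2_iff (v : Fin 2 → ZMod 2) : v ∈ U2 ↔ v 0 = 0 := by
  rw [U2, Submodule.mem_span_singleton]
  constructor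
  · rintro ⟨c, rfl⟩; simp [e2]
  · intro h
    exact ⟨v 1, funext fun i => by fin_cases i <;> simp [e2, h, smul_eq_mul]⟩

lemma beta_apply (v : Fin 2 → ZMod 2) : betaM.mulVecLin v = ![v 0, 0] := by
  funext i
  fin_cases i <;>
    simp [betaM, Matrix.mulVecLin_apply, Matrix.mulVec, dotProduct,
      Fin.sum_univ_two]

lemma diagBeta_apply (a b c : ℕ)
    (t : (Fin a → (Fin 2 → ZMod 2)) × (Fin b → (Fin 2 → ZMod 2)) ×
      (Fin c → (Fin 2 → ZMod 2))) :
    diagBeta a b c t =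
      (fun i => betaM.mulVecLin (t.1 i), fun j => betaM.mulVecLin (t.2.1 j),
        fun k => betaM.mulVecLin (t.2.2 k)) := rfl

/-- Case V cofavored-submodule classification: a subspace `T` of `M = U₁^a × U₂^b × V^c`
closed under the diagonal action of `β` which surjects onto `(V/U₂)^{a+c}` (via the first `a`
and last `c` coordinates reduced mod `U₂`) and onto `(V/U₁)^{b+c}` (via the middle `b` and
last `c` coordinates reduced mod `U₁`) must be all of `M`. -/
theorem stmt5 (a b c : ℕ)
    (T : Submodule (ZMod 2)
      ((Fin a → (Fin 2 → ZMod 2)) × (Fin b → (Fin 2 → ZMod 2)) ×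
        (Fin c → (Fin 2 → ZMod 2))))
    (hTM : T ≤ Msub a b c)
    (hβ : ∀ t ∈ T, diagBeta a b c t ∈ T)
    (hsurj₁ : ∀ (x : Fin a → (Fin 2 → ZMod 2)) (z : Fin c → (Fin 2 → ZMod 2)),
      ∃ t ∈ T, (∀ i, t.1 i - x i ∈ U2) ∧ (∀ k, t.2.2 k - z k ∈ U2))
    (hsurj₂ : ∀ (y : Fin b → (Fin 2 → ZMod 2)) (z : Fin c → (Fin 2 → ZMod 2)),
      ∃ t ∈ T, (∀ j, t.2.1 j - y j ∈ U1) ∧ (∀ k, t.2.2 k - z k ∈ U1)) :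
    T = Msub a b c := by
  refine le_antisymm hTM ?_
  rintro ⟨x, y, z⟩ hm
  obtain ⟨hx, hy, -⟩ : (∀ i, x i ∈ U1) ∧ (∀ j, y j ∈ U2) ∧ True := by
    obtain ⟨h1, h2, -⟩ := hm
    exact ⟨fun i => h1 i trivial, fun j => h2 j trivial, trivial⟩
  -- first witness
  obtain ⟨t, htT, ht1, ht2⟩ := hsurj₁ x z
  obtain ⟨ht1', -, -⟩ := hTM htT
  have hbt : diagBeta a b c t ∈ T := hβ t htT
  have h1eq : diagBeta a b c t = (x, 0, fun k => ![z k 0, 0]) := by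
    rw [diagBeta_apply]
    refine Prod.ext (funext fun i => ?_) (Prod.ext (funext fun j => ?_)
      (funext fun k => ?_))
    · show betaM.mulVecLin (t.1 i) = x i
      rw [beta_apply]
      have e1' : t.1 i 0 = x i 0 := by
        have := (mem_U2_iff _).mp (ht1 i); simpa [sub_eq_zero] using this
      have e2' : x i 1 = 0 := (mem_U1_iff _).mp (hx i)
      funext w; fin_cases w <;> simp [e1', e2']
    · show betaM.mulVecLin (t.2.1 j) = (0 : Fin b → Fin 2 → ZMod 2) j
      rw [beta_apply]
      obtain ⟨-, h2, -⟩ := hTM htT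
      have : t.2.1 j 0 = 0 := (mem_U2_iff _).mp (h2 j trivial)
      funext w; fin_cases w <;> simp [this]
    · show betaM.mulVecLin (t.2.2 k) = ![z k 0, 0]
      rw [beta_apply]
      have : t.2.2 k 0 = z k 0 := by
        have := (mem_U2_iff _).mp (ht2 k); simpa [sub_eq_zero] using this
      funext w; fin_cases w <;> simp [this]
  -- second witness
  obtain ⟨s, hsT, hs1, hs2⟩ := hsurj₂ y z
  have hbs : s - diagBeta a b c s ∈ T := sub_mem hsT (hβ s hsT)
  have h2eq : s - diagBeta a b c s = (0, y, fun k => ![0, z k 1]) := by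
    rw [diagBeta_apply]
    obtain ⟨h1, h2, -⟩ := hTM hsT
    refine Prod.ext (funext fun i => ?_) (Prod.ext (funext fun j => ?_)
      (funext fun k => ?_))
    · show s.1 i - betaM.mulVecLin (s.1 i) = 0
      rw [beta_apply]
      have : s.1 i 1 = 0 := (mem_U1_iff _).mp (h1 i trivial)
      funext w; fin_cases w <;> simp [this]
    · show s.2.1 j - betaM.mulVecLin (s.2.1 j) = y j
      rw [beta_apply]
      have e1' : s.2.1 j 1 = y j 1 := by
        have := (mem_U1_iff _).mp (hs1 j); simpa [sub_eq_zero] using this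
      have e2' : y j 0 = 0 := (mem_U2_iff _).mp (hy j)
      funext w; fin_cases w <;> simp [e1', e2']
    · show s.2.2 k - betaM.mulVecLin (s.2.2 k) = ![0, z k 1]
      rw [beta_apply]
      have : s.2.2 k 1 = z k 1 := by
        have := (mem_U1_iff _).mp (hs2 k); simpa [sub_eq_zero] using this
      funext w; fin_cases w <;> simp [this]
  have : ((x, y, z) :
      (Fin a → (Fin 2 → ZMod 2)) × (Fin b → (Fin 2 → ZMod 2)) ×
        (Fin c → (Fin 2 → ZMod 2))) =
      (x, 0, fun k => ![z k 0, 0]) + (0, y, fun k => ![0, z k 1]) := by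
    refine Prod.ext (by simp) (Prod.ext (by simp) (funext fun k => ?_))
    show z k = (fun k => ![z k 0, 0]) k + (fun k => ![0, z k 1]) k
    funext w; fin_cases w <;> simp
  rw [this]
  exact add_mem (h1eq ▸ hbt) (h2eq ▸ hbs)
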